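/- arXiv:2603.28072 — 3 statements merged into one kernel-verified Lean document; each statement's English description precedes it below -/
import Mathlib

section
/- Let θ: I → ℝ be smooth with θ' nowhere zero and cos θ nowhere zero, let a, b ∈ ℝ with a tan θ(s) + b ≠ 0 for all s, and set f = 1/(a tan θ + b), κ = -f/cos θ = -1/(a sin θ + b cos θ), τ = -θ'. Then the spherical condition (1/τ · (1/κ)')' + τ/κ = 0 holds on I. -/
/-- Let θ be smooth with θ' and cos θ nowhere zero, a, b constants with
a tan θ + b nowhere zero, f = 1/(a tan θ + b), κ = -f/cos θ = -1/(a sin θ + b cos θ),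
τ = -θ'.  Then the spherical condition (1/τ · (1/κ)')' + τ/κ = 0 holds. -/
theorem statement6 (θ κ τ f : ℝ → ℝ) (a b : ℝ)
    (hθ : ContDiff ℝ (⊤ : ℕ∞) θ)
    (hθ' : ∀ s, deriv θ s ≠ 0) (hcos : ∀ s, Real.cos (θ s) ≠ 0)
    (hab : ∀ s, a * Real.tan (θ s) + b ≠ 0)
    (hf : ∀ s, f s = (a * Real.tan (θ s) + b)⁻¹)
    (hκ : ∀ s, κ s = -f s / Real.cos (θ s))
    (hκ' : ∀ s, κ s = -(a * Real.sin (θ s) + b * Real.cos (θ s))⁻¹)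
    (hτ : ∀ s, τ s = -deriv θ s) :
    ∀ s, deriv (fun u => (τ u)⁻¹ * deriv (fun v => (κ v)⁻¹) u) s + τ s / κ s = 0 := by
  have hdθ : Differentiable ℝ θ := hθ.differentiable (by simp)
  have hkinv : (fun v => (κ v)⁻¹) = fun v => -(a * Real.sin (θ v) + b * Real.cos (θ v)) := by
    funext v; rw [hκ' v, inv_neg, inv_inv]
  have hd1 : ∀ u, deriv (fun v => (κ v)⁻¹) u
      = deriv θ u * (b * Real.sin (θ u) - a * Real.cos (θ u)) := by
    intro u
    rw [hkinv]
    have h1 : HasDerivAt (fun v => -(a * Real.sin (θ v) + b * Real.cos (θ v)))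
        (-(a * (Real.cos (θ u) * deriv θ u) + b * (-Real.sin (θ u) * deriv θ u))) u :=
      ((((Real.hasDerivAt_sin (θ u)).comp u (hdθ u).hasDerivAt).const_mul a).add
        (((Real.hasDerivAt_cos (θ u)).comp u (hdθ u).hasDerivAt).const_mul b)).neg
    rw [h1.deriv]; ring
  have hfun : (fun u => (τ u)⁻¹ * deriv (fun v => (κ v)⁻¹) u)
      = fun u => a * Real.cos (θ u) - b * Real.sin (θ u) := by
    funext u
    rw [hτ u, hd1 u]
    field_simp [hθ' u]
    ring
  intro s
  rw [hfun]
  have h2 : HasDerivAt (fun u => a * Real.cos (θ u) - b * Real.sin (θ u))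
      (a * (-Real.sin (θ s) * deriv θ s) - b * (Real.cos (θ s) * deriv θ s)) s :=
    (((Real.hasDerivAt_cos (θ s)).comp s (hdθ s).hasDerivAt).const_mul a).sub
      (((Real.hasDerivAt_sin (θ s)).comp s (hdθ s).hasDerivAt).const_mul b)
  rw [h2.deriv, hτ s, hκ' s, div_eq_mul_inv, inv_neg, inv_inv]
  ring
end

section
/- Let γ be a Frenet curve in a 3-dimensional Riemannian manifold parametrized by arc length with Frenet frame {T, N, B} and curvatures κ, τ, and let V = λ₀ T + cos θ N + λ₁ B be a unit torse-forming vector field along γ with potential f and ω(T) = -f λ₀. Then the Frenet equations force the system: f(1-λ₀²) - λ₀' + κ cos θ = 0, -f λ₀ cos θ + θ' sin θ - λ₀ κ + λ₁ τ = 0, and f λ₀ λ₁ + λ₁' + τ cos θ = 0. -/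
/-! Substituting the Frenet equations and `V` into the Leibniz expansion of `∇_T V` writes both
sides of `∇_T V = f T - f l₀ V` in the orthonormal frame `T, N, B`; the three equations are the
comparison of the `T`, `N` and `B` coefficients. -/

open RealInnerProductSpace

section OrthonormalTriple

variable {E : Type*} [NormedAddCommGroup E] [InnerProductSpace ℝ E] {T N B : E}

theorem inner_smul_add_smul_add_smul (u : E) (a b c : ℝ) :
    ⟪u, a • T + b • N + c • B⟫ = a * ⟪u, T⟫ + b * ⟪u, N⟫ + c * ⟪u, B⟫ := by
  simp only [inner_add_right, inner_smul_right]

theorem coeffs_eq_of_orthonormal_triple (hTT : ⟪T, T⟫ = 1) (hNN : ⟪N, N⟫ = 1)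
    (hBB : ⟪B, B⟫ = 1) (hTN : ⟪T, N⟫ = 0) (hTB : ⟪T, B⟫ = 0) (hNB : ⟪N, B⟫ = 0)
    {a b c a' b' c' : ℝ} (h : a • T + b • N + c • B = a' • T + b' • N + c' • B) :
    a = a' ∧ b = b' ∧ c = c' := by
  have hNT : ⟪N, T⟫ = 0 := by rw [real_inner_comm, hTN]
  have hBT : ⟪B, T⟫ = 0 := by rw [real_inner_comm, hTB]
  have hBN : ⟪B, N⟫ = 0 := by rw [real_inner_comm, hNB]
  have coeff (u : E) := congrArg (⟪u, ·⟫) h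
  simp only [inner_smul_add_smul_add_smul] at coeff
  refine ⟨?_, ?_, ?_⟩
  · simpa only [hTT, hTN, hTB, mul_one, mul_zero, add_zero] using coeff T
  · simpa only [hNT, hNN, hNB, mul_one, mul_zero, add_zero, zero_add] using coeff N
  · simpa only [hBT, hBN, hBB, mul_one, mul_zero, zero_add] using coeff B

end OrthonormalTriple

theorem statement16_general {E : Type*} [NormedAddCommGroup E] [InnerProductSpace ℝ E]
    (T N B DT DN DB V : ℝ → E) (κ τ f l₀ l₁ θ : ℝ → ℝ)
    (hTT : ∀ s, (inner ℝ (T s) (T s) : ℝ) = 1)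
    (hNN : ∀ s, (inner ℝ (N s) (N s) : ℝ) = 1)
    (hBB : ∀ s, (inner ℝ (B s) (B s) : ℝ) = 1)
    (hTN : ∀ s, (inner ℝ (T s) (N s) : ℝ) = 0)
    (hTB : ∀ s, (inner ℝ (T s) (B s) : ℝ) = 0)
    (hNB : ∀ s, (inner ℝ (N s) (B s) : ℝ) = 0)
    (hDT : ∀ s, DT s = κ s • N s)
    (hDN : ∀ s, DN s = -κ s • T s + τ s • B s)
    (hDB : ∀ s, DB s = -τ s • N s)
    (hθ : Differentiable ℝ θ)
    (hV : ∀ s, V s = l₀ s • T s + Real.cos (θ s) • N s + l₁ s • B s)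
    (htorse : ∀ s,
      deriv l₀ s • T s + l₀ s • DT s +
        deriv (fun u => Real.cos (θ u)) s • N s + Real.cos (θ s) • DN s +
        deriv l₁ s • B s + l₁ s • DB s
      = f s • T s + (-(f s * l₀ s)) • V s) :
    ∀ s,
      f s * (1 - l₀ s ^ 2) - deriv l₀ s + κ s * Real.cos (θ s) = 0 ∧
      -(f s * l₀ s * Real.cos (θ s)) + deriv θ s * Real.sin (θ s)
        - l₀ s * κ s + l₁ s * τ s = 0 ∧
      f s * l₀ s * l₁ s + deriv l₁ s + τ s * Real.cos (θ s) = 0 := by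
  intro s
  have hcos : deriv (fun u => Real.cos (θ u)) s = -Real.sin (θ s) * deriv θ s :=
    (hθ s).hasDerivAt.cos.deriv
  have hframe :
      (deriv l₀ s - κ s * Real.cos (θ s)) • T s
        + (l₀ s * κ s - Real.sin (θ s) * deriv θ s - l₁ s * τ s) • N s
        + (τ s * Real.cos (θ s) + deriv l₁ s) • B s
      = (f s * (1 - l₀ s ^ 2)) • T s + (-(f s * l₀ s * Real.cos (θ s))) • N s
        + (-(f s * l₀ s * l₁ s)) • B s := by
    convert htorse s using 1
    · rw [hDT, hDN, hDB, hcos]; module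
    · rw [hV]; module
  obtain ⟨hTcoeff, hNcoeff, hBcoeff⟩ := coeffs_eq_of_orthonormal_triple (hTT s) (hNN s) (hBB s)
    (hTN s) (hTB s) (hNB s) hframe
  exact ⟨by linarith, by linarith, by linarith⟩

/-- Let γ be an arc-length Frenet curve in a Riemannian 3-manifold with
Frenet frame {T,N,B} and curvatures κ, τ (∇_T T = κN, ∇_T N = -κT + τB, ∇_T B = -τN),
and V = l₀ T + cos θ N + l₁ B a unit torse-forming vector field along γ with potential f
and ω(T) = -f l₀ (so ∇_T V = f T - f l₀ V).  Then the Frenet equations force: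
f(1-l₀²) - l₀' + κ cos θ = 0,  -f l₀ cos θ + θ' sin θ - l₀ κ + l₁ τ = 0,  and
f l₀ l₁ + l₁' + τ cos θ = 0.
Vector fields along γ are modeled as maps into the inner product space `E`;
`DT`, `DN`, `DB` are the covariant derivatives of the frame, and the covariant
derivative of V, expanded by the Leibniz rule, equals f T + ω(T) V (`htorse`). -/
theorem statement16 {E : Type*} [NormedAddCommGroup E] [InnerProductSpace ℝ E]
    (T N B DT DN DB V : ℝ → E) (κ τ f l₀ l₁ θ : ℝ → ℝ)
    (hTT : ∀ s, (inner ℝ (T s) (T s) : ℝ) = 1)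
    (hNN : ∀ s, (inner ℝ (N s) (N s) : ℝ) = 1)
    (hBB : ∀ s, (inner ℝ (B s) (B s) : ℝ) = 1)
    (hTN : ∀ s, (inner ℝ (T s) (N s) : ℝ) = 0)
    (hTB : ∀ s, (inner ℝ (T s) (B s) : ℝ) = 0)
    (hNB : ∀ s, (inner ℝ (N s) (B s) : ℝ) = 0)
    (hκpos : ∀ s, 0 < κ s)
    (hDT : ∀ s, DT s = κ s • N s)
    (hDN : ∀ s, DN s = -κ s • T s + τ s • B s)
    (hDB : ∀ s, DB s = -τ s • N s)
    (hl₀ : Differentiable ℝ l₀) (hl₁ : Differentiable ℝ l₁) (hθ : Differentiable ℝ θ)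
    (hV : ∀ s, V s = l₀ s • T s + Real.cos (θ s) • N s + l₁ s • B s)
    (hunit : ∀ s, l₀ s ^ 2 + Real.cos (θ s) ^ 2 + l₁ s ^ 2 = 1)
    (htorse : ∀ s,
      deriv l₀ s • T s + l₀ s • DT s +
        deriv (fun u => Real.cos (θ u)) s • N s + Real.cos (θ s) • DN s +
        deriv l₁ s • B s + l₁ s • DB s
      = f s • T s + (-(f s * l₀ s)) • V s) :
    ∀ s,
      f s * (1 - l₀ s ^ 2) - deriv l₀ s + κ s * Real.cos (θ s) = 0 ∧
      -(f s * l₀ s * Real.cos (θ s)) + deriv θ s * Real.sin (θ s)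
        - l₀ s * κ s + l₁ s * τ s = 0 ∧
      f s * l₀ s * l₁ s + deriv l₁ s + τ s * Real.cos (θ s) = 0 :=
  statement16_general T N B DT DN DB V κ τ f l₀ l₁ θ hTT hNN hBB hTN hTB hNB hDT hDN hDB hθ hV
    htorse
end

section
/- In the warped product M³ = J ×_{e^t} ℝ², with orthonormal frame ∂_t, e₁ = e^{-t}∂_x, e₂ = e^{-t}∂_y, the curve γ(s) = (log cosh s, ∫^s sech²u cos φ(u) du, ∫^s sech²u sin φ(u) du) (for smooth strictly increasing φ) is parametrized by arc length, has unit tangent T = tanh s ∂_t + sech s (cos φ e₁ + sin φ e₂), principal normal N = -sin φ e₁ + cos φ e₂ (which is orthogonal to ∂_t), curvature κ = φ' sech s, and torsion τ = φ' tanh s; in particular τ/κ = sinh s. -/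
/-!
Every claim is a pointwise computation in the orthonormal frame: the frame components of `γ'`
come from the fundamental theorem of calculus, and after differentiating, each covariant
derivative reduces to the identities `tanh² + sech² = 1` and `cos² + sin² = 1`.
-/

open Real intervalIntegral

/-- Covariant derivative along the curve in the warped product M³ = J ×_{e^t} ℝ², in the
orthonormal frame (∂_t, e₁ = e^{-t}∂_x, e₂ = e^{-t}∂_y).  If the unit tangent has frame
components (T₀, T₁, T₂) and X = a ∂_t + b e₁ + c e₂, then (using ∇_{e₁}∂_t = e₁,
∇_{e₂}∂_t = e₂, ∇_{e₁}e₁ = ∇_{e₂}e₂ = -∂_t, other frame derivatives zero):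
∇_T X = (a' - T₁b - T₂c) ∂_t + (b' + T₁a) e₁ + (c' + T₂a) e₂. -/
noncomputable def covD (T₁ T₂ a b c : ℝ → ℝ) (s : ℝ) : ℝ × ℝ × ℝ :=
  (deriv a s - T₁ s * b s - T₂ s * c s, deriv b s + T₁ s * a s, deriv c s + T₂ s * a s)

lemma tanh_sq_add_inv_cosh_sq (x : ℝ) : tanh x ^ 2 + (cosh x)⁻¹ ^ 2 = 1 := by
  have := cosh_sq x
  rw [tanh_eq_sinh_div_cosh]
  field_simp
  linarith

lemma hasDerivAt_inv_cosh (x : ℝ) :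
    HasDerivAt (fun u => (cosh u)⁻¹) (-(tanh x * (cosh x)⁻¹)) x :=
  ((hasDerivAt_cosh x).inv (cosh_pos x).ne').congr_deriv <| by
    rw [tanh_eq_sinh_div_cosh]
    ring

lemma hasDerivAt_tanh (x : ℝ) : HasDerivAt tanh ((cosh x)⁻¹ ^ 2) x := by
  rw [show tanh = fun u => sinh u / cosh u from funext tanh_eq_sinh_div_cosh]
  refine ((hasDerivAt_sinh x).div (hasDerivAt_cosh x) (cosh_pos x).ne').congr_deriv ?_
  field_simp
  linarith [cosh_sq x]

lemma deriv_log_cosh (x : ℝ) : deriv (fun u => log (cosh u)) x = tanh x := by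
  rw [((hasDerivAt_cosh x).log (cosh_pos x).ne').deriv, tanh_eq_sinh_div_cosh]

lemma cosh_mul_deriv_integral_inv_cosh_sq_mul {f : ℝ → ℝ} (hf : Continuous f) (x : ℝ) :
    cosh x * deriv (fun u => ∫ v in (0:ℝ)..u, (cosh v)⁻¹ ^ 2 * f v) x = (cosh x)⁻¹ * f x := by
  have hcont : Continuous fun v => (cosh v)⁻¹ ^ 2 * f v :=
    ((continuous_cosh.inv₀ fun v => (cosh_pos v).ne').pow 2).mul hf
  rw [hcont.deriv_integral _ 0 x]
  field_simp [(cosh_pos x).ne']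

lemma tanh_sq_add_inv_cosh_mul_cos_sq_add_inv_cosh_mul_sin_sq (x θ : ℝ) :
    tanh x ^ 2 + ((cosh x)⁻¹ * cos θ) ^ 2 + ((cosh x)⁻¹ * sin θ) ^ 2 = 1 := by
  linear_combination tanh_sq_add_inv_cosh_sq x + (cosh x)⁻¹ ^ 2 * cos_sq_add_sin_sq θ

lemma covD_eq_of_hasDerivAt {T₁ T₂ a b c : ℝ → ℝ} {a' b' c' s : ℝ} (ha : HasDerivAt a a' s)
    (hb : HasDerivAt b b' s) (hc : HasDerivAt c c' s) :
    covD T₁ T₂ a b c s =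
      (a' - T₁ s * b s - T₂ s * c s, b' + T₁ s * a s, c' + T₂ s * a s) := by
  rw [covD, ha.deriv, hb.deriv, hc.deriv]

section FrenetFrame

variable {θ : ℝ → ℝ} {θ' s : ℝ}

lemma covD_tangent (hθ : HasDerivAt θ θ' s) :
    covD (fun u => (cosh u)⁻¹ * cos (θ u)) (fun u => (cosh u)⁻¹ * sin (θ u))
      (fun u => tanh u) (fun u => (cosh u)⁻¹ * cos (θ u)) (fun u => (cosh u)⁻¹ * sin (θ u)) s
      = (θ' * (cosh s)⁻¹ * 0, θ' * (cosh s)⁻¹ * (-sin (θ s)), θ' * (cosh s)⁻¹ * cos (θ s)) := by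
  rw [covD_eq_of_hasDerivAt (hasDerivAt_tanh s)
    ((hasDerivAt_inv_cosh s).fun_mul hθ.cos)
    ((hasDerivAt_inv_cosh s).fun_mul hθ.sin)]
  refine Prod.ext ?_ (Prod.ext ?_ ?_)
  · linear_combination (-(cosh s)⁻¹ ^ 2) * cos_sq_add_sin_sq (θ s)
  · ring
  · ring

lemma covD_normal (hθ : HasDerivAt θ θ' s) :
    covD (fun u => (cosh u)⁻¹ * cos (θ u)) (fun u => (cosh u)⁻¹ * sin (θ u))
      (fun _ => 0) (fun u => -sin (θ u)) (fun u => cos (θ u)) s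
      = (-(θ' * (cosh s)⁻¹) * tanh s + θ' * tanh s * (cosh s)⁻¹,
         -(θ' * (cosh s)⁻¹) * ((cosh s)⁻¹ * cos (θ s)) + θ' * tanh s * (-tanh s * cos (θ s)),
         -(θ' * (cosh s)⁻¹) * ((cosh s)⁻¹ * sin (θ s))
           + θ' * tanh s * (-tanh s * sin (θ s))) := by
  rw [covD_eq_of_hasDerivAt (hasDerivAt_const s 0) hθ.sin.fun_neg hθ.cos]
  refine Prod.ext ?_ (Prod.ext ?_ ?_)
  · ring
  · linear_combination θ' * cos (θ s) * tanh_sq_add_inv_cosh_sq s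
  · linear_combination θ' * sin (θ s) * tanh_sq_add_inv_cosh_sq s

lemma covD_binormal (hθ : HasDerivAt θ θ' s) :
    covD (fun u => (cosh u)⁻¹ * cos (θ u)) (fun u => (cosh u)⁻¹ * sin (θ u))
      (fun u => (cosh u)⁻¹) (fun u => -tanh u * cos (θ u)) (fun u => -tanh u * sin (θ u)) s
      = (-(θ' * tanh s) * 0, -(θ' * tanh s) * (-sin (θ s)), -(θ' * tanh s) * cos (θ s)) := by
  rw [covD_eq_of_hasDerivAt (hasDerivAt_inv_cosh s) ((hasDerivAt_tanh s).fun_neg.fun_mul hθ.cos)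
    ((hasDerivAt_tanh s).fun_neg.fun_mul hθ.sin)]
  refine Prod.ext ?_ (Prod.ext ?_ ?_)
  · linear_combination (tanh s * (cosh s)⁻¹) * cos_sq_add_sin_sq (θ s)
  · ring
  · ring

end FrenetFrame

lemma mul_tanh_div_mul_inv_cosh {k : ℝ} (hk : k ≠ 0) (x : ℝ) :
    k * tanh x / (k * (cosh x)⁻¹) = sinh x := by
  rw [tanh_eq_sinh_div_cosh]
  field_simp [(cosh_pos x).ne']

theorem statement19_general (φ : ℝ → ℝ) (hφ' : ∀ s, 0 < deriv φ s) :
    ∀ s : ℝ,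
      -- frame components of γ' : γ = (t, x, y), T₀ = t', T₁ = e^t x', T₂ = e^t y'
      (deriv (fun u => Real.log (Real.cosh u)) s = Real.tanh s ∧
       Real.cosh s *
         deriv (fun u => ∫ v in (0:ℝ)..u, ((Real.cosh v)⁻¹) ^ 2 * Real.cos (φ v)) s
         = (Real.cosh s)⁻¹ * Real.cos (φ s) ∧
       Real.cosh s *
         deriv (fun u => ∫ v in (0:ℝ)..u, ((Real.cosh v)⁻¹) ^ 2 * Real.sin (φ v)) s
         = (Real.cosh s)⁻¹ * Real.sin (φ s)) ∧
      -- arc length: |T| = 1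
      (Real.tanh s) ^ 2 + ((Real.cosh s)⁻¹ * Real.cos (φ s)) ^ 2 +
        ((Real.cosh s)⁻¹ * Real.sin (φ s)) ^ 2 = 1 ∧
      -- ∇_T T = κ N with κ = φ' sech s and N = (0, -sin φ, cos φ) (so N ⊥ ∂_t)
      covD (fun u => (Real.cosh u)⁻¹ * Real.cos (φ u))
           (fun u => (Real.cosh u)⁻¹ * Real.sin (φ u))
           (fun u => Real.tanh u)
           (fun u => (Real.cosh u)⁻¹ * Real.cos (φ u))
           (fun u => (Real.cosh u)⁻¹ * Real.sin (φ u)) s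
        = (deriv φ s * (Real.cosh s)⁻¹ * 0,
           deriv φ s * (Real.cosh s)⁻¹ * (-Real.sin (φ s)),
           deriv φ s * (Real.cosh s)⁻¹ * Real.cos (φ s)) ∧
      -- ∇_T N = -κ T + τ B with τ = φ' tanh s and B = (sech s, -tanh s cos φ, -tanh s sin φ)
      covD (fun u => (Real.cosh u)⁻¹ * Real.cos (φ u))
           (fun u => (Real.cosh u)⁻¹ * Real.sin (φ u))
           (fun _ => (0:ℝ))
           (fun u => -Real.sin (φ u))
           (fun u => Real.cos (φ u)) s
        = (-(deriv φ s * (Real.cosh s)⁻¹) * Real.tanh s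
             + deriv φ s * Real.tanh s * (Real.cosh s)⁻¹,
           -(deriv φ s * (Real.cosh s)⁻¹) * ((Real.cosh s)⁻¹ * Real.cos (φ s))
             + deriv φ s * Real.tanh s * (-Real.tanh s * Real.cos (φ s)),
           -(deriv φ s * (Real.cosh s)⁻¹) * ((Real.cosh s)⁻¹ * Real.sin (φ s))
             + deriv φ s * Real.tanh s * (-Real.tanh s * Real.sin (φ s))) ∧
      -- ∇_T B = -τ N
      covD (fun u => (Real.cosh u)⁻¹ * Real.cos (φ u))
           (fun u => (Real.cosh u)⁻¹ * Real.sin (φ u))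
           (fun u => (Real.cosh u)⁻¹)
           (fun u => -Real.tanh u * Real.cos (φ u))
           (fun u => -Real.tanh u * Real.sin (φ u)) s
        = (-(deriv φ s * Real.tanh s) * 0,
           -(deriv φ s * Real.tanh s) * (-Real.sin (φ s)),
           -(deriv φ s * Real.tanh s) * Real.cos (φ s)) ∧
      -- ratio of torsion to curvature
      (deriv φ s * Real.tanh s) / (deriv φ s * (Real.cosh s)⁻¹) = Real.sinh s := by
  -- `deriv φ x ≠ 0` forces differentiability at `x`, since `deriv` is `0` elsewhere.
  have hφ : Differentiable ℝ φ := fun x => differentiableAt_of_deriv_ne_zero (hφ' x).ne'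
  intro s
  have hφs : HasDerivAt φ (deriv φ s) s := (hφ s).hasDerivAt
  exact ⟨⟨deriv_log_cosh s,
      cosh_mul_deriv_integral_inv_cosh_sq_mul (continuous_cos.comp hφ.continuous) s,
      cosh_mul_deriv_integral_inv_cosh_sq_mul (continuous_sin.comp hφ.continuous) s⟩,
    tanh_sq_add_inv_cosh_mul_cos_sq_add_inv_cosh_mul_sin_sq s (φ s),
    covD_tangent hφs, covD_normal hφs, covD_binormal hφs,
    mul_tanh_div_mul_inv_cosh (hφ' s).ne' s⟩

/-- In M³ = J ×_{e^t} ℝ², the curve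
γ(s) = (log cosh s, ∫^s sech²u cos φ(u) du, ∫^s sech²u sin φ(u) du), for smooth strictly
increasing φ, is parametrized by arc length, has unit tangent
T = tanh s ∂_t + sech s (cos φ e₁ + sin φ e₂), principal normal N = -sin φ e₁ + cos φ e₂
(orthogonal to ∂_t), curvature κ = φ' sech s, torsion τ = φ' tanh s, and τ/κ = sinh s. -/
theorem statement19 (φ : ℝ → ℝ) (hφ : ContDiff ℝ 1 φ) (hφ' : ∀ s, 0 < deriv φ s) :
    ∀ s : ℝ,
      -- frame components of γ' : γ = (t, x, y), T₀ = t', T₁ = e^t x', T₂ = e^t y'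
      (deriv (fun u => Real.log (Real.cosh u)) s = Real.tanh s ∧
       Real.cosh s *
         deriv (fun u => ∫ v in (0:ℝ)..u, ((Real.cosh v)⁻¹) ^ 2 * Real.cos (φ v)) s
         = (Real.cosh s)⁻¹ * Real.cos (φ s) ∧
       Real.cosh s *
         deriv (fun u => ∫ v in (0:ℝ)..u, ((Real.cosh v)⁻¹) ^ 2 * Real.sin (φ v)) s
         = (Real.cosh s)⁻¹ * Real.sin (φ s)) ∧
      -- arc length: |T| = 1
      (Real.tanh s) ^ 2 + ((Real.cosh s)⁻¹ * Real.cos (φ s)) ^ 2 +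
        ((Real.cosh s)⁻¹ * Real.sin (φ s)) ^ 2 = 1 ∧
      -- ∇_T T = κ N with κ = φ' sech s and N = (0, -sin φ, cos φ) (so N ⊥ ∂_t)
      covD (fun u => (Real.cosh u)⁻¹ * Real.cos (φ u))
           (fun u => (Real.cosh u)⁻¹ * Real.sin (φ u))
           (fun u => Real.tanh u)
           (fun u => (Real.cosh u)⁻¹ * Real.cos (φ u))
           (fun u => (Real.cosh u)⁻¹ * Real.sin (φ u)) s
        = (deriv φ s * (Real.cosh s)⁻¹ * 0,
           deriv φ s * (Real.cosh s)⁻¹ * (-Real.sin (φ s)),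
           deriv φ s * (Real.cosh s)⁻¹ * Real.cos (φ s)) ∧
      -- ∇_T N = -κ T + τ B with τ = φ' tanh s and B = (sech s, -tanh s cos φ, -tanh s sin φ)
      covD (fun u => (Real.cosh u)⁻¹ * Real.cos (φ u))
           (fun u => (Real.cosh u)⁻¹ * Real.sin (φ u))
           (fun _ => (0:ℝ))
           (fun u => -Real.sin (φ u))
           (fun u => Real.cos (φ u)) s
        = (-(deriv φ s * (Real.cosh s)⁻¹) * Real.tanh s
             + deriv φ s * Real.tanh s * (Real.cosh s)⁻¹,
           -(deriv φ s * (Real.cosh s)⁻¹) * ((Real.cosh s)⁻¹ * Real.cos (φ s))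
             + deriv φ s * Real.tanh s * (-Real.tanh s * Real.cos (φ s)),
           -(deriv φ s * (Real.cosh s)⁻¹) * ((Real.cosh s)⁻¹ * Real.sin (φ s))
             + deriv φ s * Real.tanh s * (-Real.tanh s * Real.sin (φ s))) ∧
      -- ∇_T B = -τ N
      covD (fun u => (Real.cosh u)⁻¹ * Real.cos (φ u))
           (fun u => (Real.cosh u)⁻¹ * Real.sin (φ u))
           (fun u => (Real.cosh u)⁻¹)
           (fun u => -Real.tanh u * Real.cos (φ u))
           (fun u => -Real.tanh u * Real.sin (φ u)) s
        = (-(deriv φ s * Real.tanh s) * 0,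
           -(deriv φ s * Real.tanh s) * (-Real.sin (φ s)),
           -(deriv φ s * Real.tanh s) * Real.cos (φ s)) ∧
      -- ratio of torsion to curvature
      (deriv φ s * Real.tanh s) / (deriv φ s * (Real.cosh s)⁻¹) = Real.sinh s :=
  statement19_general φ hφ'
end
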